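/- arXiv:1111.0062 — 3 statements merged into one kernel-verified Lean document; each statement's English description precedes it below -/
import Mathlib

section
/- A maximizing joint policy of an identical-payoff Bayesian game is Pareto optimal among Nash equilibria: if β* maximizes the expected payoff ∑_θ Pr(θ)·u(θ, β(θ)), then there is no other joint policy β' such that for all agents i and all types θ_i the conditional expected payoff V_{θ_i}(β_i'(θ_i), β'_{-i}) is at least V_{θ_i}(β_i*(θ_i), β*_{-i}), with strict inequality for at least one agent and type. -/
/-
Conditioning on agent `i`'s type and averaging back with the marginal weights recovers the
total expected payoff, so a Pareto improvement of all conditional payoffs of one agent,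
strict for some type, strictly increases the expected payoff and contradicts maximality.
-/

/-- Conditional expected payoff for agent `i` of type `θi` taking action `ai`
while the other agents follow the joint policy `β`. -/
noncomputable def Vcond {n : ℕ} (Θ A : Fin n → Type*)
    [∀ i, Fintype (Θ i)] [∀ i, Fintype (A i)] [∀ i, DecidableEq (Θ i)]
    (Pr : (∀ i, Θ i) → ℝ) (u : (∀ i, Θ i) → (∀ i, A i) → ℝ)
    (i : Fin n) (θi : Θ i) (ai : A i) (β : ∀ j, Θ j → A j) : ℝ :=
  (∑ θ : ∀ j, Θ j,
      if θ i = θi then Pr θ * u θ (Function.update (fun j => β j (θ j)) i ai) else 0) /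
    (∑ θ : ∀ j, Θ j, if θ i = θi then Pr θ else 0)

namespace BayesianGame

variable {n : ℕ} {Θ A : Fin n → Type*} [∀ i, Fintype (Θ i)] [∀ i, DecidableEq (Θ i)]

def marginal (Pr : (∀ i, Θ i) → ℝ) (i : Fin n) (θi : Θ i) : ℝ :=
  ∑ θ : ∀ j, Θ j, if θ i = θi then Pr θ else 0

def expectedPayoff (Pr : (∀ i, Θ i) → ℝ) (u : (∀ i, Θ i) → (∀ i, A i) → ℝ)
    (β : ∀ j, Θ j → A j) : ℝ :=
  ∑ θ, Pr θ * u θ (fun j => β j (θ j))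

variable [∀ i, Fintype (A i)] (Pr : (∀ i, Θ i) → ℝ) (u : (∀ i, Θ i) → (∀ i, A i) → ℝ)

theorem sum_marginal_mul_Vcond_self {i : Fin n} (hpos : ∀ θi : Θ i, marginal Pr i θi ≠ 0)
    (β : ∀ j, Θ j → A j) :
    ∑ θi : Θ i, marginal Pr i θi * Vcond Θ A Pr u i θi (β i θi) β = expectedPayoff Pr u β := by
  have hcancel (θi : Θ i) : marginal Pr i θi * Vcond Θ A Pr u i θi (β i θi) β =
      ∑ θ : ∀ j, Θ j,
        if θ i = θi then Pr θ * u θ (Function.update (fun j => β j (θ j)) i (β i θi)) else 0 :=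
    mul_div_cancel₀ _ (hpos θi)
  simp only [hcancel]
  rw [Finset.sum_comm]
  refine Finset.sum_congr rfl fun θ _ => ?_
  simp [Function.update_eq_self]

theorem expectedPayoff_lt_of_Vcond_dominates {i : Fin n}
    (hpos : ∀ θi : Θ i, 0 < marginal Pr i θi)
    {β β' : ∀ j, Θ j → A j}
    (hweak : ∀ θi, Vcond Θ A Pr u i θi (β i θi) β ≤ Vcond Θ A Pr u i θi (β' i θi) β')
    (hstrict : ∃ θi, Vcond Θ A Pr u i θi (β i θi) β < Vcond Θ A Pr u i θi (β' i θi) β') :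
    expectedPayoff Pr u β < expectedPayoff Pr u β' := by
  have hne (θi : Θ i) : marginal Pr i θi ≠ 0 := (hpos θi).ne'
  rw [← sum_marginal_mul_Vcond_self Pr u hne, ← sum_marginal_mul_Vcond_self Pr u hne]
  obtain ⟨θ0, hθ0⟩ := hstrict
  exact Finset.sum_lt_sum (fun θi _ => mul_le_mul_of_nonneg_left (hweak θi) (hpos θi).le)
    ⟨θ0, Finset.mem_univ _, mul_lt_mul_of_pos_left hθ0 (hpos θ0)⟩

end BayesianGame

theorem stmt_1_general {n : ℕ} (Θ A : Fin n → Type*)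
    [∀ i, Fintype (Θ i)] [∀ i, Fintype (A i)]
    [∀ i, DecidableEq (Θ i)]
    (Pr : (∀ i, Θ i) → ℝ)
    (hpos : ∀ (i : Fin n) (θi : Θ i), 0 < ∑ θ : ∀ j, Θ j, if θ i = θi then Pr θ else 0)
    (u : (∀ i, Θ i) → (∀ i, A i) → ℝ)
    (βstar : ∀ j, Θ j → A j)
    (hmax : ∀ β : ∀ j, Θ j → A j,
      (∑ θ, Pr θ * u θ (fun i => β i (θ i))) ≤
        ∑ θ, Pr θ * u θ (fun i => βstar i (θ i))) :
    ¬ ∃ β' : ∀ j, Θ j → A j,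
        (∀ (i : Fin n) (θi : Θ i),
          Vcond Θ A Pr u i θi (βstar i θi) βstar ≤ Vcond Θ A Pr u i θi (β' i θi) β') ∧
        (∃ (i : Fin n) (θi : Θ i),
          Vcond Θ A Pr u i θi (βstar i θi) βstar < Vcond Θ A Pr u i θi (β' i θi) β') := by
  rintro ⟨β', hweak, i, hstrict⟩
  exact (hmax β').not_gt
    (BayesianGame.expectedPayoff_lt_of_Vcond_dominates Pr u (hpos i) (hweak i) hstrict)

/-- A maximizing joint policy of an identical-payoff Bayesian game is
Pareto optimal: no other joint policy weakly improves the conditional expected payoff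
for every agent and type, with strict improvement for some agent and type. -/
theorem stmt_1 {n : ℕ} (Θ A : Fin n → Type*)
    [∀ i, Fintype (Θ i)] [∀ i, Fintype (A i)]
    [∀ i, Nonempty (Θ i)] [∀ i, Nonempty (A i)] [∀ i, DecidableEq (Θ i)]
    (Pr : (∀ i, Θ i) → ℝ) (hPr : ∀ θ, 0 ≤ Pr θ) (hPr1 : ∑ θ, Pr θ = 1)
    (hpos : ∀ (i : Fin n) (θi : Θ i), 0 < ∑ θ : ∀ j, Θ j, if θ i = θi then Pr θ else 0)
    (u : (∀ i, Θ i) → (∀ i, A i) → ℝ)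
    (βstar : ∀ j, Θ j → A j)
    (hmax : ∀ β : ∀ j, Θ j → A j,
      (∑ θ, Pr θ * u θ (fun i => β i (θ i))) ≤
        ∑ θ, Pr θ * u θ (fun i => βstar i (θ i))) :
    ¬ ∃ β' : ∀ j, Θ j → A j,
        (∀ (i : Fin n) (θi : Θ i),
          Vcond Θ A Pr u i θi (βstar i θi) βstar ≤ Vcond Θ A Pr u i θi (β' i θi) β') ∧
        (∃ (i : Fin n) (θi : Θ i),
          Vcond Θ A Pr u i θi (βstar i θi) βstar < Vcond Θ A Pr u i θi (β' i θi) β') :=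
  stmt_1_general Θ A Pr hpos u βstar hmax
end

section
/- The Q_MDP value function is an upper bound to the Q_POMDP value function: for a finite-horizon POMDP, at every stage t, belief b, and action a, Q_POMDP^t(b,a) ≤ ∑_s b(s) · Q_MDP^t(s,a), where Q_MDP is the optimal Q-function of the underlying fully observable MDP and Q_POMDP is the optimal Q-function of the belief MDP. -/
/-!
Induction on the number of steps to go. After observation `o`, the belief-MDP value at the
updated belief is, by the induction hypothesis, at most a `b^{a,o}`-average of `Q_MDP`, and
`max_{a'} ∑ b^{a,o}(s') Q(s',a') ≤ ∑ b^{a,o}(s') max_{a'} Q(s',a')`: knowing the state can only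
help. Multiplying by `Pr(o|b,a)` cancels the normalisation of `b^{a,o}`, and summing over `o`
removes the observation model, leaving exactly the one-step backup of `Q_MDP`.
-/

open Finset

variable {S A O : Type*} [Fintype S] [Fintype A] [Fintype O] [Nonempty A]

/-- Optimal Q-function of the underlying MDP, by backward induction;
`k` is the number of steps-to-go after the current one (`k = 0` is the last stage). -/
noncomputable def QMDP (T : S → A → S → ℝ) (R : S → A → ℝ) : ℕ → S → A → ℝ
  | 0, s, a => R s a
  | k + 1, s, a =>
      R s a + ∑ s' : S, T s a s' *
        Finset.univ.sup' Finset.univ_nonempty (fun a' => QMDP T R k s' a')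

/-- Probability `Pr(o | b, a)` of observing `o` after taking `a` in belief `b`. -/
noncomputable def Pobs (T : S → A → S → ℝ) (Ω : A → S → O → ℝ)
    (b : S → ℝ) (a : A) (o : O) : ℝ :=
  ∑ s' : S, Ω a s' o * ∑ s : S, T s a s' * b s

/-- Bayes belief update `b^{a,o}`. -/
noncomputable def bUpd (T : S → A → S → ℝ) (Ω : A → S → O → ℝ)
    (b : S → ℝ) (a : A) (o : O) : S → ℝ :=
  fun s' => Ω a s' o * (∑ s : S, T s a s' * b s) / Pobs T Ω b a o

/-- Optimal Q-function of the belief MDP (`Q_POMDP`), by backward induction. -/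
noncomputable def QPOMDP (T : S → A → S → ℝ) (Ω : A → S → O → ℝ) (R : S → A → ℝ) :
    ℕ → (S → ℝ) → A → ℝ
  | 0, b, a => ∑ s : S, b s * R s a
  | k + 1, b, a =>
      (∑ s : S, b s * R s a) +
        ∑ o : O,
          if 0 < Pobs T Ω b a o then
            Pobs T Ω b a o *
              Finset.univ.sup' Finset.univ_nonempty
                (fun a' => QPOMDP T Ω R k (bUpd T Ω b a o) a')
          else 0

noncomputable def VMDP (T : S → A → S → ℝ) (R : S → A → ℝ) (k : ℕ) (s : S) : ℝ :=
  univ.sup' univ_nonempty (QMDP T R k s)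

theorem QMDP_succ (T : S → A → S → ℝ) (R : S → A → ℝ) (k : ℕ) (s : S) (a : A) :
    QMDP T R (k + 1) s a = R s a + ∑ s', T s a s' * VMDP T R k s' :=
  rfl

theorem sum_mul_QMDP_succ (T : S → A → S → ℝ) (R : S → A → ℝ) (k : ℕ) (b : S → ℝ) (a : A) :
    ∑ s, b s * QMDP T R (k + 1) s a =
      ∑ s, b s * R s a + ∑ s, b s * ∑ s', T s a s' * VMDP T R k s' := by
  simp only [QMDP_succ, mul_add, sum_add_distrib]

theorem sup'_sum_mul_le_sum_mul_sup' {ι α : Type*} {s : Finset α} (hs : s.Nonempty)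
    {t : Finset ι} {w : ι → ℝ} (hw : ∀ i ∈ t, 0 ≤ w i) (f : α → ι → ℝ) :
    s.sup' hs (fun a => ∑ i ∈ t, w i * f a i) ≤ ∑ i ∈ t, w i * s.sup' hs (fun a => f a i) :=
  sup'_le _ _ fun _ ha => sum_le_sum fun i hi =>
    mul_le_mul_of_nonneg_left (le_sup' (fun a => f a i) ha) (hw i hi)

-- `Ω a s' o * ∑ s, T s a s' * b s` is the joint weight `Pr(s', o | b, a)`; its sum over `s'`
-- is `Pobs T Ω b a o`.
section Belief

variable {T : S → A → S → ℝ} {Ω : A → S → O → ℝ} {b : S → ℝ}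

omit [Fintype A] [Fintype O] [Nonempty A]

theorem joint_nonneg (hT : ∀ s a s', 0 ≤ T s a s') (hΩ : ∀ a s' o, 0 ≤ Ω a s' o)
    (hb : ∀ s, 0 ≤ b s) (a : A) (o : O) (s' : S) :
    0 ≤ Ω a s' o * ∑ s, T s a s' * b s :=
  mul_nonneg (hΩ a s' o) (sum_nonneg fun s _ => mul_nonneg (hT s a s') (hb s))

theorem bUpd_nonneg (hT : ∀ s a s', 0 ≤ T s a s') (hΩ : ∀ a s' o, 0 ≤ Ω a s' o)
    (hb : ∀ s, 0 ≤ b s) (a : A) (o : O) (s' : S) :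
    0 ≤ bUpd T Ω b a o s' :=
  div_nonneg (joint_nonneg hT hΩ hb a o s')
    (sum_nonneg fun s' _ => joint_nonneg hT hΩ hb a o s')

theorem Pobs_mul_bUpd {a : A} {o : O} (h : Pobs T Ω b a o ≠ 0) (s' : S) :
    Pobs T Ω b a o * bUpd T Ω b a o s' = Ω a s' o * ∑ s, T s a s' * b s :=
  mul_div_cancel₀ _ h

theorem joint_eq_zero_of_Pobs_nonpos (hT : ∀ s a s', 0 ≤ T s a s')
    (hΩ : ∀ a s' o, 0 ≤ Ω a s' o) (hb : ∀ s, 0 ≤ b s) {a : A} {o : O}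
    (h : Pobs T Ω b a o ≤ 0) (s' : S) :
    Ω a s' o * ∑ s, T s a s' * b s = 0 :=
  (sum_eq_zero_iff_of_nonneg fun s' _ => joint_nonneg hT hΩ hb a o s').mp
    (h.antisymm (sum_nonneg fun s' _ => joint_nonneg hT hΩ hb a o s')) s' (mem_univ s')

end Belief

omit [Fintype A] [Nonempty A] in
theorem sum_obs_joint_mul {T : S → A → S → ℝ} {Ω : A → S → O → ℝ} {b : S → ℝ}
    (hΩ1 : ∀ a s', ∑ o, Ω a s' o = 1) (a : A) (M : S → ℝ) :
    ∑ o, ∑ s', Ω a s' o * (∑ s, T s a s' * b s) * M s' =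
      ∑ s, b s * ∑ s', T s a s' * M s' := by
  calc ∑ o, ∑ s', Ω a s' o * (∑ s, T s a s' * b s) * M s'
      = ∑ s', ∑ s, T s a s' * b s * M s' := by
        rw [sum_comm]
        refine sum_congr rfl fun s' _ => ?_
        rw [← sum_mul, ← sum_mul, hΩ1, one_mul, sum_mul]
    _ = ∑ s, b s * ∑ s', T s a s' * M s' := by
        rw [sum_comm]
        simp only [mul_sum]
        exact sum_congr rfl fun _ _ => sum_congr rfl fun _ _ => by ring

theorem obs_term_le {T : S → A → S → ℝ} {Ω : A → S → O → ℝ} {R : S → A → ℝ} {k : ℕ}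
    (hT : ∀ s a s', 0 ≤ T s a s') (hΩ : ∀ a s' o, 0 ≤ Ω a s' o)
    (ih : ∀ b : S → ℝ, (∀ s, 0 ≤ b s) → ∀ a, QPOMDP T Ω R k b a ≤ ∑ s, b s * QMDP T R k s a)
    {b : S → ℝ} (hb : ∀ s, 0 ≤ b s) (a : A) (o : O) :
    (if 0 < Pobs T Ω b a o then
        Pobs T Ω b a o * univ.sup' univ_nonempty (fun a' => QPOMDP T Ω R k (bUpd T Ω b a o) a')
      else 0) ≤ ∑ s', Ω a s' o * (∑ s, T s a s' * b s) * VMDP T R k s' := by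
  split_ifs with hP
  · have hupd := bUpd_nonneg hT hΩ hb a o
    calc Pobs T Ω b a o * univ.sup' univ_nonempty (fun a' => QPOMDP T Ω R k (bUpd T Ω b a o) a')
        ≤ Pobs T Ω b a o * ∑ s', bUpd T Ω b a o s' * VMDP T R k s' := by
          refine mul_le_mul_of_nonneg_left ?_ hP.le
          exact (sup'_mono_fun fun a' _ => ih _ hupd a').trans
            (sup'_sum_mul_le_sum_mul_sup' _ (fun s' _ => hupd s') _)
      _ = ∑ s', Ω a s' o * (∑ s, T s a s' * b s) * VMDP T R k s' := by
          simp only [mul_sum, ← mul_assoc, Pobs_mul_bUpd hP.ne']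
  · refine (sum_eq_zero fun s' _ => ?_).ge
    rw [joint_eq_zero_of_Pobs_nonpos hT hΩ hb (not_lt.mp hP) s', zero_mul]

theorem stmt_7_general (T : S → A → S → ℝ) (Ω : A → S → O → ℝ) (R : S → A → ℝ)
    (hT : ∀ s a s', 0 ≤ T s a s')
    (hΩ : ∀ a s' o, 0 ≤ Ω a s' o) (hΩ1 : ∀ a s', ∑ o, Ω a s' o = 1)
    (k : ℕ) (b : S → ℝ) (hb : ∀ s, 0 ≤ b s) (a : A) :
    QPOMDP T Ω R k b a ≤ ∑ s : S, b s * QMDP T R k s a := by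
  induction k generalizing b a with
  | zero => exact le_rfl
  | succ k ih =>
    rw [sum_mul_QMDP_succ, ← sum_obs_joint_mul hΩ1]
    exact add_le_add le_rfl (sum_le_sum fun o _ => obs_term_le hT hΩ ih hb a o)

/-- `Q_MDP` is an upper bound to `Q_POMDP`: at every stage, belief `b`
and action `a`, `Q_POMDP(b,a) ≤ ∑_s b(s) Q_MDP(s,a)`. -/
theorem stmt_7 (T : S → A → S → ℝ) (Ω : A → S → O → ℝ) (R : S → A → ℝ)
    (hT : ∀ s a s', 0 ≤ T s a s') (hT1 : ∀ s a, ∑ s', T s a s' = 1)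
    (hΩ : ∀ a s' o, 0 ≤ Ω a s' o) (hΩ1 : ∀ a s', ∑ o, Ω a s' o = 1)
    (k : ℕ) (b : S → ℝ) (hb : ∀ s, 0 ≤ b s) (hb1 : ∑ s, b s = 1) (a : A) :
    QPOMDP T Ω R k b a ≤ ∑ s : S, b s * QMDP T R k s a :=
  stmt_7_general T Ω R hT hΩ hΩ1 k b hb a
end

section
/- Greedy stage-wise maximization recovers an optimal joint policy when using the optimal policy's Q-function: suppose π* is an optimal pure joint policy for a finite-horizon Dec-POMDP and Q* is defined recursively by Q*(h⃗^{h−1}, a) = R(h⃗^{h−1}, a) and Q*(h⃗^t, a) = R(h⃗^t, a) + ∑_{o⃗} Pr(o⃗ | h⃗^t, a)·Q*((h⃗^t, a, o⃗), π*(h⃗^{t+1})). Then for each stage t, the decision rule of π* at stage t maximizes, over all stage-t decision rules β^t (tuples of maps from individual observation histories to individual actions), the quantity ∑_{h⃗^t consistent with π*} Pr(h⃗^t | b^0)·Q*(h⃗^t, β^t(h⃗^t)). -/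
/-!
Multiplying `Q*(h^t, a)` by `Pr(h^t)` yields a quantity that is linear in the unnormalized
state distribution at `h^t` and obeys the same recursion without any normalization. Summed
over all stage-`t` histories it therefore telescopes into the expected reward collected from
stage `t` on. Replacing the stage-`t` decision rule of `π` by `β` leaves the rewards of
earlier stages unchanged, so `V(π[t ↦ β]) - V(π)` is the difference of the two sides of
the claimed inequality, and optimality of `π` makes it nonpositive.
-/

open Finset

variable {n : ℕ} {S : Type*} [Fintype S]
variable {A O : Fin n → Type*} [∀ i, Fintype (A i)] [∀ i, Fintype (O i)]
  [∀ i, DecidableEq (O i)]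

/-- The joint policy induced by individual policies `π i`, applied to a joint
observation history: each agent acts on its individual observation history. -/
def jointPol (π : ∀ i, ∀ t : ℕ, (Fin t → O i) → A i) (t : ℕ)
    (hist : Fin t → ∀ i, O i) : ∀ i, A i :=
  fun i => π i t (fun k => hist k i)

/-- The joint action prescribed by a stage-`t` joint decision rule
`β = (β₁,…,βₙ)` at a joint observation history. -/
def jointDR {t : ℕ} (β : ∀ i, (Fin t → O i) → A i) (hist : Fin t → ∀ i, O i) :
    ∀ i, A i :=
  fun i => β i (fun k => hist k i)

/-- Joint distribution over (state, joint observation-history) pairs induced by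
`b0`, the kernel `P` and a joint policy `ρ`. -/
noncomputable def Pd13 (P : S → (∀ i, A i) → S × (∀ i, O i) → ℝ) (b0 : S → ℝ)
    (ρ : ∀ t : ℕ, (Fin t → ∀ i, O i) → ∀ i, A i) :
    ∀ t : ℕ, S → (Fin t → ∀ i, O i) → ℝ
  | 0, s, _ => b0 s
  | t + 1, s', hist =>
      ∑ s : S, P s (ρ t (Fin.init hist)) (s', hist (Fin.last t)) *
        Pd13 P b0 ρ t s (Fin.init hist)

/-- Marginal probability of a joint observation history. -/
noncomputable def PrH13 (P : S → (∀ i, A i) → S × (∀ i, O i) → ℝ) (b0 : S → ℝ)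
    (ρ : ∀ t : ℕ, (Fin t → ∀ i, O i) → ∀ i, A i) (t : ℕ)
    (hist : Fin t → ∀ i, O i) : ℝ :=
  ∑ s : S, Pd13 P b0 ρ t s hist

/-- Belief `Pr(s | h^t, b0)` over states given a history. -/
noncomputable def bel13 (P : S → (∀ i, A i) → S × (∀ i, O i) → ℝ) (b0 : S → ℝ)
    (ρ : ∀ t : ℕ, (Fin t → ∀ i, O i) → ∀ i, A i) (t : ℕ)
    (hist : Fin t → ∀ i, O i) : S → ℝ :=
  fun s => Pd13 P b0 ρ t s hist / PrH13 P b0 ρ t hist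

/-- Probability `Pr(o | b, a)` of the next joint observation given belief `b`. -/
noncomputable def Pobs13 (P : S → (∀ i, A i) → S × (∀ i, O i) → ℝ)
    (b : S → ℝ) (a : ∀ i, A i) (o : ∀ i, O i) : ℝ :=
  ∑ s' : S, ∑ s : S, P s a (s', o) * b s

/-- Bayes belief update. -/
noncomputable def bUpd13 (P : S → (∀ i, A i) → S × (∀ i, O i) → ℝ)
    (b : S → ℝ) (a : ∀ i, A i) (o : ∀ i, O i) : S → ℝ :=
  fun s' => (∑ s : S, P s a (s', o) * b s) / Pobs13 P b a o

/-- The Q-value function of the joint policy `π`: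
`Q*(h^{h-1},a) = R(h^{h-1},a)` and
`Q*(h^t,a) = R(h^t,a) + ∑_o Pr(o|h^t,a)·Q*((h^t,a,o), π(h^{t+1}))`,
where the expected immediate reward is computed from the belief `b` associated
with the history `h^t`. -/
noncomputable def Qstar13 (P : S → (∀ i, A i) → S × (∀ i, O i) → ℝ)
    (R : S → (∀ i, A i) → ℝ) (π : ∀ i, ∀ t : ℕ, (Fin t → O i) → A i) (h : ℕ) :
    ∀ t : ℕ, (Fin t → ∀ i, O i) → (S → ℝ) → (∀ i, A i) → ℝ :=
  fun t hist b a =>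
    if ht : t + 1 < h then
      (∑ s : S, b s * R s a) +
        ∑ o : ∀ i, O i, Pobs13 P b a o *
          Qstar13 P R π h (t + 1) (Fin.snoc hist o) (bUpd13 P b a o)
            (jointPol π (t + 1) (Fin.snoc hist o))
    else ∑ s : S, b s * R s a
termination_by t => h - t
decreasing_by omega

/-- The (flat) value of a joint policy `ρ`: `V(ρ) = ∑_{t<h} E[R(s^t, ρ(h^t))]`. -/
noncomputable def Vval13 (P : S → (∀ i, A i) → S × (∀ i, O i) → ℝ)
    (R : S → (∀ i, A i) → ℝ) (b0 : S → ℝ)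
    (ρ : ∀ t : ℕ, (Fin t → ∀ i, O i) → ∀ i, A i) (h : ℕ) : ℝ :=
  ∑ t ∈ Finset.range h, ∑ hist : Fin t → ∀ i, O i, ∑ s : S,
    Pd13 P b0 ρ t s hist * R s (ρ t hist)

section

omit [∀ i, Fintype (A i)] [∀ i, DecidableEq (O i)]

variable (P : S → (∀ i, A i) → S × (∀ i, O i) → ℝ) (R : S → (∀ i, A i) → ℝ)
  (b0 : S → ℝ) (π : ∀ i, ∀ t : ℕ, (Fin t → O i) → A i) (h : ℕ)

lemma sum_mul_div_sum {ι : Type*} [Fintype ι] {d : ι → ℝ} (hd : ∀ s, 0 ≤ d s) :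
    (fun s => (∑ s', d s') * (d s / ∑ s', d s')) = d := by
  funext s
  by_cases hsum : ∑ s', d s' = 0
  · simp [(Finset.sum_eq_zero_iff_of_nonneg fun s _ => hd s).mp hsum s (mem_univ s)]
  · exact mul_div_cancel₀ _ hsum

lemma sum_sum_snoc {α : Type*} [Fintype α] {t : ℕ} (f : (Fin (t + 1) → α) → ℝ) :
    ∑ hist : Fin t → α, ∑ o : α, f (Fin.snoc hist o) = ∑ hist, f hist := by
  rw [Finset.sum_comm, ← Fintype.sum_prod_type' fun o hist => f (Fin.snoc hist o)]
  exact Fintype.sum_equiv (Fin.snocEquiv fun _ => α) _ f fun _ => rfl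

/-- `Pr(h^t) · Q*(h^t, a)`, computed from the unnormalized state distribution `d`
in place of the belief. -/
noncomputable def unnormQ :
    ∀ t : ℕ, (Fin t → ∀ i, O i) → (S → ℝ) → (∀ i, A i) → ℝ :=
  fun t hist d a =>
    if t + 1 < h then
      (∑ s : S, d s * R s a) +
        ∑ o : ∀ i, O i,
          unnormQ (t + 1) (Fin.snoc hist o) (fun s' => ∑ s : S, P s a (s', o) * d s)
            (jointPol π (t + 1) (Fin.snoc hist o))
    else ∑ s : S, d s * R s a
termination_by t => h - t
decreasing_by omega

lemma unnormQ_mul (t : ℕ) (hist : Fin t → ∀ i, O i) (c : ℝ) (d : S → ℝ) (a : ∀ i, A i) :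
    unnormQ P R π h t hist (fun s => c * d s) a = c * unnormQ P R π h t hist d a := by
  rw [unnormQ, unnormQ]
  split_ifs
  · simp only [mul_left_comm _ c, ← Finset.mul_sum, mul_assoc,
      unnormQ_mul (t + 1), mul_add]
  · simp only [mul_assoc, ← Finset.mul_sum]
termination_by h - t
decreasing_by omega

lemma Qstar13_eq_unnormQ (hP : ∀ s a x, 0 ≤ P s a x) (t : ℕ) (hist : Fin t → ∀ i, O i)
    (b : S → ℝ) (a : ∀ i, A i) (hb : ∀ s, 0 ≤ b s) :
    Qstar13 P R π h t hist b a = unnormQ P R π h t hist b a := by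
  rw [Qstar13, unnormQ]
  split_ifs
  · congr 1
    refine Finset.sum_congr rfl fun o _ => ?_
    have hnext : ∀ s', 0 ≤ ∑ s : S, P s a (s', o) * b s :=
      fun s' => Finset.sum_nonneg fun s _ => mul_nonneg (hP _ _ _) (hb s)
    -- `Pobs13 P b a o • bUpd13 P b a o` is the unnormalized successor distribution
    rw [Qstar13_eq_unnormQ hP (t + 1) _ (bUpd13 P b a o) _
      fun s' => div_nonneg (hnext s') (sum_nonneg fun s' _ => hnext s'), ← unnormQ_mul]
    exact congrArg (unnormQ P R π h _ _ · _) (sum_mul_div_sum hnext)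
  · rfl
termination_by h - t
decreasing_by omega

omit [∀ i, Fintype (O i)] in
lemma Pd13_nonneg (hP : ∀ s a x, 0 ≤ P s a x) (hb0 : ∀ s, 0 ≤ b0 s)
    (ρ : ∀ t : ℕ, (Fin t → ∀ i, O i) → ∀ i, A i) (t : ℕ) (s : S) (hist : Fin t → ∀ i, O i) :
    0 ≤ Pd13 P b0 ρ t s hist := by
  induction t generalizing s with
  | zero => exact hb0 s
  | succ t ih => exact Finset.sum_nonneg fun s' _ => mul_nonneg (hP _ _ _) (ih _ _)

omit [∀ i, Fintype (O i)] in
lemma Pd13_congr {ρ ρ' : ∀ t : ℕ, (Fin t → ∀ i, O i) → ∀ i, A i} {t : ℕ}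
    (hρ : ∀ u < t, ρ u = ρ' u) : Pd13 P b0 ρ t = Pd13 P b0 ρ' t := by
  induction t with
  | zero => rfl
  | succ t ih =>
    funext s hist
    simp only [Pd13, hρ t t.lt_succ_self, ih fun u hu => hρ u (hu.trans t.lt_succ_self)]

lemma PrH13_mul_Qstar13_bel13 (hP : ∀ s a x, 0 ≤ P s a x) (hb0 : ∀ s, 0 ≤ b0 s)
    (ρ : ∀ t : ℕ, (Fin t → ∀ i, O i) → ∀ i, A i) (t : ℕ) (hist : Fin t → ∀ i, O i)
    (a : ∀ i, A i) :
    PrH13 P b0 ρ t hist * Qstar13 P R π h t hist (bel13 P b0 ρ t hist) a =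
      unnormQ P R π h t hist (Pd13 P b0 ρ t · hist) a := by
  have hPd : ∀ s, 0 ≤ Pd13 P b0 ρ t s hist := (Pd13_nonneg P b0 hP hb0 ρ t · hist)
  rw [Qstar13_eq_unnormQ P R π h hP _ _ (bel13 P b0 ρ t hist) _
    fun s => div_nonneg (hPd s) (sum_nonneg fun s _ => hPd s), ← unnormQ_mul]
  exact congrArg (unnormQ P R π h _ _ · _) (sum_mul_div_sum hPd)

noncomputable def stageReward (ρ : ∀ t : ℕ, (Fin t → ∀ i, O i) → ∀ i, A i) (u : ℕ) : ℝ :=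
  ∑ hist : Fin u → ∀ i, O i, ∑ s : S, Pd13 P b0 ρ u s hist * R s (ρ u hist)

lemma unnormQ_Pd13_of_lt {ρ : ∀ t : ℕ, (Fin t → ∀ i, O i) → ∀ i, A i} {t : ℕ}
    (ht : t + 1 < h) (hρ : ρ (t + 1) = jointPol π (t + 1)) (hist : Fin t → ∀ i, O i) :
    unnormQ P R π h t hist (Pd13 P b0 ρ t · hist) (ρ t hist) =
      (∑ s : S, Pd13 P b0 ρ t s hist * R s (ρ t hist)) +
        ∑ o : ∀ i, O i, unnormQ P R π h (t + 1) (Fin.snoc hist o)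
          (Pd13 P b0 ρ (t + 1) · (Fin.snoc hist o)) (ρ (t + 1) (Fin.snoc hist o)) := by
  rw [unnormQ, if_pos ht, hρ]
  simp only [Pd13, Fin.init_snoc, Fin.snoc_last]

lemma sum_unnormQ_Pd13 {ρ : ∀ t : ℕ, (Fin t → ∀ i, O i) → ∀ i, A i} {t : ℕ} (ht : t < h)
    (hρ : ∀ u, t < u → ρ u = jointPol π u) :
    ∑ hist : Fin t → ∀ i, O i, unnormQ P R π h t hist (Pd13 P b0 ρ t · hist) (ρ t hist) =
      ∑ u ∈ Ico t h, stageReward P R b0 ρ u := by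
  by_cases hlast : t + 1 < h
  · simp only [unnormQ_Pd13_of_lt P R b0 π h hlast (hρ _ t.lt_succ_self), sum_add_distrib,
      sum_sum_snoc fun hist => unnormQ P R π h (t + 1) hist (Pd13 P b0 ρ (t + 1) · hist)
        (ρ (t + 1) hist),
      sum_unnormQ_Pd13 hlast fun u hu => hρ u (by omega), sum_eq_sum_Ico_succ_bot ht]
    rfl
  · obtain rfl : h = t + 1 := by omega
    rw [Nat.Ico_succ_singleton, sum_singleton]
    exact sum_congr rfl fun hist _ => by rw [unnormQ, if_neg hlast]
termination_by h - t
decreasing_by omega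

lemma Vval13_eq_sum_stageReward (ρ : ∀ t : ℕ, (Fin t → ∀ i, O i) → ∀ i, A i) :
    Vval13 P R b0 ρ h = ∑ u ∈ range h, stageReward P R b0 ρ u := rfl

def updatePol (t : ℕ) (β : ∀ i, (Fin t → O i) → A i) : ∀ i, ∀ u : ℕ, (Fin u → O i) → A i :=
  fun i u => if hu : u = t then fun obs => β i (obs ∘ Fin.cast hu.symm) else π i u

omit [∀ i, Fintype (O i)] in
lemma jointPol_updatePol_self (t : ℕ) (β : ∀ i, (Fin t → O i) → A i) :
    jointPol (updatePol π t β) t = jointDR β := by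
  funext hist i
  simp [jointPol, jointDR, updatePol]

omit [∀ i, Fintype (O i)] in
lemma jointPol_updatePol_of_ne {t u : ℕ} (β : ∀ i, (Fin t → O i) → A i) (hu : u ≠ t) :
    jointPol (updatePol π t β) u = jointPol π u := by
  funext hist i
  simp [jointPol, updatePol, hu]

lemma sum_PrH13_mul_Qstar13 (hP : ∀ s a x, 0 ≤ P s a x) (hb0 : ∀ s, 0 ≤ b0 s)
    {ρ : ∀ t : ℕ, (Fin t → ∀ i, O i) → ∀ i, A i} {t : ℕ} (ht : t < h)
    (hρ : ∀ u ≠ t, ρ u = jointPol π u) :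
    ∑ hist : Fin t → ∀ i, O i, PrH13 P b0 (jointPol π) t hist *
        Qstar13 P R π h t hist (bel13 P b0 (jointPol π) t hist) (ρ t hist) =
      ∑ u ∈ Ico t h, stageReward P R b0 ρ u := by
  have hPd : Pd13 P b0 ρ t = Pd13 P b0 (jointPol π) t := Pd13_congr P b0 fun u hu => hρ u hu.ne
  simp only [PrH13_mul_Qstar13_bel13 P R b0 π h hP hb0, ← hPd]
  exact sum_unnormQ_Pd13 P R b0 π h ht fun u hu => hρ u hu.ne'

lemma Vval13_eq_add_sum_PrH13_mul_Qstar13 (hP : ∀ s a x, 0 ≤ P s a x)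
    (hb0 : ∀ s, 0 ≤ b0 s) {ρ : ∀ t : ℕ, (Fin t → ∀ i, O i) → ∀ i, A i} {t : ℕ} (ht : t < h)
    (hρ : ∀ u ≠ t, ρ u = jointPol π u) :
    Vval13 P R b0 ρ h = ∑ u ∈ range t, stageReward P R b0 (jointPol π) u +
      ∑ hist : Fin t → ∀ i, O i, PrH13 P b0 (jointPol π) t hist *
        Qstar13 P R π h t hist (bel13 P b0 (jointPol π) t hist) (ρ t hist) := by
  rw [sum_PrH13_mul_Qstar13 P R b0 π h hP hb0 ht hρ, Vval13_eq_sum_stageReward,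
    ← sum_range_add_sum_Ico _ ht.le]
  congr 1
  refine sum_congr rfl fun u hu => ?_
  have hut : u < t := mem_range.mp hu
  simp only [stageReward, hρ u hut.ne, Pd13_congr P b0 fun v hv => hρ v (hv.trans hut).ne]

end

theorem stmt_13_general (P : S → (∀ i, A i) → S × (∀ i, O i) → ℝ)
    (R : S → (∀ i, A i) → ℝ) (b0 : S → ℝ)
    (π : ∀ i, ∀ t : ℕ, (Fin t → O i) → A i) (h : ℕ)
    (hP : ∀ s a x, 0 ≤ P s a x)
    (hb0 : ∀ s, 0 ≤ b0 s)
    (hopt : ∀ π' : ∀ i, ∀ t : ℕ, (Fin t → O i) → A i,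
      Vval13 P R b0 (jointPol π') h ≤ Vval13 P R b0 (jointPol π) h) :
    ∀ t, t < h → ∀ β : ∀ i, (Fin t → O i) → A i,
      (∑ hist : Fin t → ∀ i, O i,
          PrH13 P b0 (jointPol π) t hist *
            Qstar13 P R π h t hist (bel13 P b0 (jointPol π) t hist) (jointDR β hist)) ≤
        ∑ hist : Fin t → ∀ i, O i,
          PrH13 P b0 (jointPol π) t hist *
            Qstar13 P R π h t hist (bel13 P b0 (jointPol π) t hist)
              (jointPol π t hist) := by
  intro t ht β
  have hV := hopt (updatePol π t β)
  rwa [Vval13_eq_add_sum_PrH13_mul_Qstar13 P R b0 π h hP hb0 ht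
      fun u hu => jointPol_updatePol_of_ne π β hu,
    Vval13_eq_add_sum_PrH13_mul_Qstar13 P R b0 π h hP hb0 ht fun _ _ => rfl,
    jointPol_updatePol_self, add_le_add_iff_left] at hV

/-- Greedy stage-wise maximization recovers an optimal joint policy
when using the optimal policy's Q-function: if `π` is an optimal pure joint policy
then, at every stage `t`, its decision rule maximizes
`∑_{h^t consistent with π} Pr(h^t|b0) · Q*(h^t, β(h^t))` over all stage-`t`
joint decision rules `β`. -/
theorem stmt_13 (P : S → (∀ i, A i) → S × (∀ i, O i) → ℝ)
    (R : S → (∀ i, A i) → ℝ) (b0 : S → ℝ)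
    (π : ∀ i, ∀ t : ℕ, (Fin t → O i) → A i) (h : ℕ)
    (hP : ∀ s a x, 0 ≤ P s a x) (hP1 : ∀ s a, ∑ x : S × (∀ i, O i), P s a x = 1)
    (hb0 : ∀ s, 0 ≤ b0 s) (hb01 : ∑ s, b0 s = 1)
    (hopt : ∀ π' : ∀ i, ∀ t : ℕ, (Fin t → O i) → A i,
      Vval13 P R b0 (jointPol π') h ≤ Vval13 P R b0 (jointPol π) h) :
    ∀ t, t < h → ∀ β : ∀ i, (Fin t → O i) → A i,
      (∑ hist : Fin t → ∀ i, O i,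
          PrH13 P b0 (jointPol π) t hist *
            Qstar13 P R π h t hist (bel13 P b0 (jointPol π) t hist) (jointDR β hist)) ≤
        ∑ hist : Fin t → ∀ i, O i,
          PrH13 P b0 (jointPol π) t hist *
            Qstar13 P R π h t hist (bel13 P b0 (jointPol π) t hist)
              (jointPol π t hist) :=
  stmt_13_general P R b0 π h hP hb0 hopt
end
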